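/- arXiv:2210.11788 — 4 statements merged into one kernel-verified Lean document; each statement's English description precedes it below -/
import Mathlib

section
/- A finite group G satisfies c(G) = |G| if and only if G is an elementary abelian 2-group (i.e., every element of G has order dividing 2). -/
open Subgroup

theorem cyclic_count_eq_card_iff_elementary_abelian_two (G : Type*) [Group G] [Fintype G] :
    Nat.card {H : Subgroup G // IsCyclic H} = Nat.card G ↔ (∀ x : G, x ^ 2 = 1) := by
  classical
  have hcyc : ∀ x : G, IsCyclic (zpowers x) := fun x =>
    ⟨⟨⟨x, mem_zpowers x⟩, fun y => by
      obtain ⟨k, hk⟩ := y.2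
      exact ⟨k, Subtype.ext (by simpa using hk)⟩⟩⟩
  set f : G → {H : Subgroup G // IsCyclic H} := fun x => ⟨zpowers x, hcyc x⟩ with hf
  have hsurj : Function.Surjective f := by
    rintro ⟨H, hH⟩
    obtain ⟨⟨g, hg⟩, hgen⟩ := hH.exists_generator
    refine ⟨g, Subtype.ext <| le_antisymm ((zpowers_le).mpr hg) ?_⟩
    intro h hh
    obtain ⟨k, hk⟩ := hgen ⟨h, hh⟩
    exact ⟨k, congrArg Subtype.val hk⟩
  rw [Nat.card_eq_fintype_card, Nat.card_eq_fintype_card]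
  constructor
  · intro hcard x
    have hbij : Function.Bijective f :=
      (Fintype.bijective_iff_surjective_and_card f).mpr ⟨hsurj, hcard.symm⟩
    have hfx : f x = f x⁻¹ := Subtype.ext zpowers_inv.symm
    have hx : x = x⁻¹ := hbij.1 hfx
    rw [pow_two]
    exact mul_eq_one_iff_eq_inv.mpr hx
  · intro h2
    have key : ∀ x y : G, x ∈ zpowers y → x = 1 ∨ x = y := by
      intro x y hx
      obtain ⟨k, hk⟩ := hx
      rcases Int.even_or_odd k with ⟨m, hm⟩ | ⟨m, hm⟩
      · left
        rw [← hk, hm]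
        show y ^ (m + m) = 1
        rw [zpow_add, ← pow_two]
        exact h2 _
      · right
        rw [← hk, hm]
        show y ^ (2 * m + 1) = y
        rw [zpow_add, zpow_mul, zpow_one]
        have : (y : G) ^ (2 : ℤ) = 1 := by
          rw [show ((2:ℤ)) = ((2:ℕ):ℤ) by norm_num, zpow_natCast]
          exact h2 y
        rw [this, one_zpow, one_mul]
    have hinj : Function.Injective f := by
      intro x y hxy
      have hz : zpowers x = zpowers y := congrArg Subtype.val hxy
      have hx : x ∈ zpowers y := hz ▸ mem_zpowers x
      have hy : y ∈ zpowers x := hz ▸ mem_zpowers y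
      rcases key x y hx with h1 | h1
      · rcases key y x hy with h3 | h3
        · rw [h1, h3]
        · rw [h3, h1]
      · exact h1
    exact ((Fintype.bijective_iff_surjective_and_card f).mp ⟨hinj, hsurj⟩).2.symm
end

section
/- The generalized quaternion group of order 2^a (a ≥ 3) has exactly a + 2^{a-2} cyclic subgroups. -/
open Subgroup QuaternionGroup

section aux

variable {G : Type*} [Group G]

lemma isCyclic_zpowers (g : G) : IsCyclic (zpowers g) := by
  refine ⟨⟨⟨g, mem_zpowers g⟩, fun x => ?_⟩⟩
  obtain ⟨y, hy⟩ := x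
  obtain ⟨k, rfl⟩ := Subgroup.mem_zpowers_iff.mp hy
  exact ⟨k, by ext; simp⟩

lemma eq_zpowers_of_cyclic {H : Subgroup G} (h : IsCyclic H) : ∃ g : G, H = zpowers g := by
  obtain ⟨⟨g, hg⟩, hgen⟩ := h.exists_generator
  refine ⟨g, le_antisymm ?_ ((zpowers_le).mpr hg)⟩
  intro x hx
  obtain ⟨k, hk⟩ := hgen ⟨x, hx⟩
  exact ⟨k, by simpa [Subtype.ext_iff] using hk⟩

end aux

section quat

variable {n : ℕ} [NeZero n]

lemma neg_n_eq : -((n : ℕ) : ZMod (2 * n)) = (n : ZMod (2 * n)) := by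
  have h : ((n : ℕ) : ZMod (2 * n)) + ((n : ℕ) : ZMod (2 * n)) = 0 := by
    rw [← Nat.cast_add, ← two_mul, ZMod.natCast_self]
  exact neg_eq_of_add_eq_zero_left h

lemma a_eq_pow (i : ZMod (2 * n)) : (QuaternionGroup.a i) = (QuaternionGroup.a 1) ^ i.val := by
  rw [a_one_pow, ZMod.natCast_val, ZMod.cast_id]

lemma mem_zpowers_a_shape {i : ZMod (2 * n)} {x : QuaternionGroup n}
    (hx : x ∈ zpowers (QuaternionGroup.a i)) : ∃ j, x = QuaternionGroup.a j := by
  rw [← mem_powers_iff_mem_zpowers] at hx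
  obtain ⟨m, rfl⟩ := hx
  beta_reduce
  exact ⟨((i.val * m : ℕ) : ZMod (2 * n)), by rw [a_eq_pow, ← pow_mul, a_one_pow]⟩

lemma xa_pow_three (i : ZMod (2 * n)) :
    (QuaternionGroup.xa i) ^ 3 = QuaternionGroup.xa ((n : ZMod (2 * n)) + i) := by
  rw [pow_succ, xa_sq, a_mul_xa, sub_eq_add_neg, neg_n_eq, add_comm]

lemma mem_zpowers_xa_shape {i : ZMod (2 * n)} {x : QuaternionGroup n}
    (hx : x ∈ zpowers (QuaternionGroup.xa i)) :
    x = 1 ∨ x = QuaternionGroup.a (n : ZMod (2 * n)) ∨ x = QuaternionGroup.xa i ∨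
      x = QuaternionGroup.xa ((n : ZMod (2 * n)) + i) := by
  rw [← mem_powers_iff_mem_zpowers] at hx
  obtain ⟨m, rfl⟩ := hx
  beta_reduce
  have h4 : (QuaternionGroup.xa i) ^ m = (QuaternionGroup.xa i) ^ (m % 4) := by
    conv_lhs => rw [← Nat.div_add_mod m 4]
    rw [pow_add, pow_mul, xa_pow_four, one_pow, one_mul]
  rw [h4]
  have hlt : m % 4 < 4 := Nat.mod_lt _ (by norm_num)
  interval_cases h : m % 4
  · exact Or.inl (pow_zero _)
  · exact Or.inr (Or.inr (Or.inl (pow_one _)))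
  · exact Or.inr (Or.inl (xa_sq i))
  · exact Or.inr (Or.inr (Or.inr (xa_pow_three i)))

lemma zpowers_xa_add_n (i : ZMod (2 * n)) :
    zpowers (QuaternionGroup.xa ((n : ZMod (2 * n)) + i)) = zpowers (QuaternionGroup.xa i) := by
  apply le_antisymm
  · rw [zpowers_le]
    exact mem_powers_iff_mem_zpowers.mp ⟨3, xa_pow_three i⟩
  · rw [zpowers_le]
    refine mem_powers_iff_mem_zpowers.mp ⟨3, ?_⟩
    beta_reduce
    rw [xa_pow_three]
    congr 1
    rw [← add_assoc, ← Nat.cast_add, ← two_mul, ZMod.natCast_self, zero_add]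

lemma zpowers_a_gcd (i : ZMod (2 * n)) :
    zpowers (QuaternionGroup.a i) =
      zpowers (QuaternionGroup.a ((Nat.gcd (2 * n) i.val : ℕ) : ZMod (2 * n))) := by
  apply le_antisymm
  · rw [zpowers_le]
    obtain ⟨t, ht⟩ : Nat.gcd (2 * n) i.val ∣ i.val := Nat.gcd_dvd_right _ _
    refine mem_powers_iff_mem_zpowers.mp ⟨t, ?_⟩
    beta_reduce
    rw [← a_one_pow, ← pow_mul, ← ht, ← a_eq_pow]
  · rw [zpowers_le]
    have hbez := Nat.gcd_eq_gcd_ab (2 * n) i.val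
    have h1 : (QuaternionGroup.a 1 : QuaternionGroup n) ^ ((2 * n : ℕ) : ℤ) = 1 := by
      rw [zpow_natCast]; exact a_one_pow_n
    have h2 : (QuaternionGroup.a ((Nat.gcd (2 * n) i.val : ℕ) : ZMod (2 * n)) :
        QuaternionGroup n) = (QuaternionGroup.a 1) ^ ((Nat.gcd (2 * n) i.val : ℕ) : ℤ) := by
      rw [zpow_natCast, a_one_pow]
    refine Subgroup.mem_zpowers_iff.mpr ⟨Nat.gcdB (2 * n) i.val, ?_⟩
    beta_reduce
    rw [h2, hbez, zpow_add, zpow_mul, zpow_mul, h1, one_zpow, one_mul,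
      zpow_natCast (QuaternionGroup.a 1) i.val, ← a_eq_pow]

end quat

theorem quaternion_cyclic_count (a : ℕ) (ha : 3 ≤ a) :
    Nat.card {H : Subgroup (QuaternionGroup (2 ^ (a - 2))) // IsCyclic H} =
      a + 2 ^ (a - 2) := by
  haveI : NeZero (2 ^ (a - 2)) := ⟨pow_ne_zero _ two_ne_zero⟩
  set N : ℕ := 2 ^ (a - 2) with hN
  have h2n : 2 * N = 2 ^ (a - 1) := by
    rw [hN, ← pow_succ']
    congr 1
    omega
  set F : Fin a ⊕ Fin N → {H : Subgroup (QuaternionGroup N) // IsCyclic H} :=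
    fun s => match s with
    | .inl k => ⟨zpowers (QuaternionGroup.a (((2 ^ (k : ℕ) : ℕ) : ZMod (2 * N)))),
        _root_.isCyclic_zpowers _⟩
    | .inr j => ⟨zpowers (QuaternionGroup.xa (((j : ℕ) : ZMod (2 * N)))),
        _root_.isCyclic_zpowers _⟩ with hF
  have key : ∀ k : Fin a,
      orderOf (QuaternionGroup.a (((2 ^ (k : ℕ) : ℕ) : ZMod (2 * N))) : QuaternionGroup N) =
        2 ^ (a - 1 - (k : ℕ)) := by
    intro k
    have hk : (k : ℕ) ≤ a - 1 := by have := k.2; omega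
    have hgcd : Nat.gcd (2 * N) (((2 ^ (k : ℕ) : ℕ) : ZMod (2 * N)).val) = 2 ^ (k : ℕ) := by
      rw [ZMod.val_natCast, h2n, Nat.gcd_comm, ← Nat.gcd_rec]
      exact Nat.gcd_eq_right (pow_dvd_pow 2 hk)
    rw [orderOf_a, hgcd, h2n, Nat.pow_div hk two_pos]
  have hFbij : Function.Bijective F := by
    constructor
    · rintro (k1 | j1) (k2 | j2) h <;> simp only [hF, Subtype.mk.injEq] at h
      · have hc : orderOf (QuaternionGroup.a (((2 ^ (k1 : ℕ) : ℕ) : ZMod (2 * N))) :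
            QuaternionGroup N) = orderOf
            (QuaternionGroup.a (((2 ^ (k2 : ℕ) : ℕ) : ZMod (2 * N))) : QuaternionGroup N) := by
          rw [← Nat.card_zpowers, ← Nat.card_zpowers, h]
        rw [key k1, key k2] at hc
        have := Nat.pow_right_injective (le_refl 2) hc
        have h1 := k1.2; have h2 := k2.2
        congr 1
        exact Fin.ext (by omega)
      · exfalso
        have hm : (QuaternionGroup.xa (((j2 : ℕ) : ZMod (2 * N))) : QuaternionGroup N) ∈
            zpowers (QuaternionGroup.a (((2 ^ (k1 : ℕ) : ℕ) : ZMod (2 * N)))) := by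
          rw [h]; exact mem_zpowers _
        obtain ⟨j', hj'⟩ := mem_zpowers_a_shape hm
        simp at hj'
      · exfalso
        have hm : (QuaternionGroup.xa (((j1 : ℕ) : ZMod (2 * N))) : QuaternionGroup N) ∈
            zpowers (QuaternionGroup.a (((2 ^ (k2 : ℕ) : ℕ) : ZMod (2 * N)))) := by
          rw [← h]; exact mem_zpowers _
        obtain ⟨j', hj'⟩ := mem_zpowers_a_shape hm
        simp at hj'
      · have hm : (QuaternionGroup.xa (((j2 : ℕ) : ZMod (2 * N))) : QuaternionGroup N) ∈
            zpowers (QuaternionGroup.xa (((j1 : ℕ) : ZMod (2 * N)))) := by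
          rw [h]; exact mem_zpowers _
        have hj1 := j1.2; have hj2 := j2.2
        have hv1 : (((j1 : ℕ) : ZMod (2 * N))).val = (j1 : ℕ) :=
          ZMod.val_cast_of_lt (by omega)
        have hv2 : (((j2 : ℕ) : ZMod (2 * N))).val = (j2 : ℕ) :=
          ZMod.val_cast_of_lt (by omega)
        rcases mem_zpowers_xa_shape hm with h1 | h1 | h1 | h1
        · rw [QuaternionGroup.one_def] at h1; exact absurd h1 (by intro h; cases h)
        · exact absurd h1 (by simp)
        · injection h1 with h1
          apply_fun ZMod.val at h1
          rw [hv1, hv2] at h1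
          congr 1
          exact Fin.ext h1.symm
        · exfalso
          injection h1 with h1
          have : ((N : ℕ) : ZMod (2 * N)) + ((j1 : ℕ) : ZMod (2 * N)) =
              (((N + (j1 : ℕ) : ℕ)) : ZMod (2 * N)) := by push_cast; ring
          rw [this] at h1
          apply_fun ZMod.val at h1
          rw [hv2, ZMod.val_natCast, Nat.mod_eq_of_lt (by omega)] at h1
          omega
    · rintro ⟨H, hH⟩
      obtain ⟨g, rfl⟩ := eq_zpowers_of_cyclic hH
      cases g with
      | a i =>
        have hdvd : Nat.gcd (2 * N) i.val ∣ 2 ^ (a - 1) := h2n ▸ Nat.gcd_dvd_left _ _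
        obtain ⟨k, hk, hgcd⟩ := (Nat.dvd_prime_pow Nat.prime_two).mp hdvd
        refine ⟨.inl ⟨k, by omega⟩, ?_⟩
        simp only [hF]
        apply Subtype.ext
        simp only
        rw [← hgcd, ← zpowers_a_gcd]
      | xa i =>
        have hiv : i.val < 2 * N := ZMod.val_lt i
        by_cases hlt : i.val < N
        · refine ⟨.inr ⟨i.val, hlt⟩, ?_⟩
          apply Subtype.ext
          simp only [hF]
          rw [ZMod.natCast_val, ZMod.cast_id]
        · refine ⟨.inr ⟨i.val - N, by omega⟩, ?_⟩
          apply Subtype.ext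
          simp only [hF]
          have hi : ((i.val : ℕ) : ZMod (2 * N)) = i := by
            rw [ZMod.natCast_val, ZMod.cast_id]
          have : i = ((N : ℕ) : ZMod (2 * N)) + ((i.val - N : ℕ) : ZMod (2 * N)) := by
            conv_lhs => rw [← hi]
            rw [← Nat.cast_add]
            congr 1
            omega
          conv_rhs => rw [this]
          rw [zpowers_xa_add_n]
  rw [← Nat.card_congr (Equiv.ofBijective F hFbij)]
  simp [Nat.card_sum]
end

section
/- For a prime p and integer a ≥ 2, the abelian group Z_p × Z_{p^{a-1}} has exactly (a-1)p + 2 cyclic subgroups. -/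
open Finset Subgroup

set_option maxHeartbeats 1600000

attribute [local instance 0] Classical.propDecidable

section Abstract

variable {G : Type*} [Group G]

lemma aux_isCyclic_iff (H : Subgroup G) : IsCyclic H ↔ ∃ x : G, H = zpowers x := by
  constructor
  · intro h
    obtain ⟨⟨g, hg⟩, hgen⟩ := h.exists_generator
    refine ⟨g, le_antisymm ?_ (zpowers_le.mpr hg)⟩
    intro y hy
    obtain ⟨n, hn⟩ := hgen ⟨y, hy⟩
    exact ⟨n, by simpa using congrArg Subtype.val hn⟩
  · rintro ⟨x, rfl⟩
    exact ⟨⟨⟨x, mem_zpowers x⟩, fun y => by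
      obtain ⟨n, hn⟩ := y.2
      exact ⟨n, Subtype.ext (by simpa using hn)⟩⟩⟩

variable [Fintype G] [DecidableEq G]

lemma aux_fiber [Fintype (Subgroup G)] (d : ℕ) :
    (univ.filter fun g : G => orderOf g = d).card
      = (univ.filter fun H : Subgroup G =>
          (∃ x : G, H = zpowers x) ∧ Nat.card H = d).card * d.totient := by
  classical
  rw [Finset.card_eq_sum_card_fiberwise (f := fun g : G => zpowers g)
      (t := univ.filter fun H : Subgroup G => (∃ x : G, H = zpowers x) ∧ Nat.card H = d)
      (fun g hg => by
        simp only [Finset.mem_coe, mem_filter, mem_univ, true_and] at hg ⊢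
        exact ⟨⟨g, rfl⟩, by rw [Nat.card_zpowers, hg]⟩)]
  rw [Finset.sum_congr rfl (fun H hH => ?_), Finset.sum_const, smul_eq_mul]
  simp only [mem_filter, mem_univ, true_and] at hH
  obtain ⟨⟨x, rfl⟩, hcard⟩ := hH
  haveI : IsCyclic (zpowers x) := (aux_isCyclic_iff _).mpr ⟨x, rfl⟩
  have hd : d ∣ Fintype.card (zpowers x) := by
    rw [← Nat.card_eq_fintype_card, hcard]
  rw [← IsCyclic.card_orderOf_eq_totient (α := zpowers x) hd]
  refine Finset.card_bij' (fun g hg => ⟨g, ?_⟩) (fun h hh => (h : G)) ?_ ?_ ?_ ?_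
  · simp only [mem_filter, mem_univ, true_and] at hg
    exact hg.2 ▸ mem_zpowers g
  · intro g hg
    simp only [mem_filter, mem_univ, true_and] at hg ⊢
    rw [Subgroup.orderOf_mk]
    exact hg.1
  · intro h hh
    simp only [mem_filter, mem_univ, true_and] at hh ⊢
    have h1 : orderOf (h : G) = d := by rw [Subgroup.orderOf_coe]; exact hh
    refine ⟨h1, Subgroup.eq_of_le_of_card_ge (zpowers_le.mpr h.2) (le_of_eq ?_)⟩
    simp only [Nat.card_zpowers] at hcard
    rw [Nat.card_zpowers, Nat.card_zpowers, hcard, h1]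
  · intro g hg; rfl
  · intro h hh; rfl

lemma aux_order_sdiff (p j : ℕ) (hp : p.Prime) (hj : 1 ≤ j) :
    (univ.filter fun g : G => orderOf g = p ^ j)
      = (univ.filter fun g : G => g ^ (p ^ j) = 1)
          \ (univ.filter fun g : G => g ^ (p ^ (j - 1)) = 1) := by
  haveI : Fact p.Prime := ⟨hp⟩
  ext g
  simp only [mem_sdiff, mem_filter, mem_univ, true_and]
  constructor
  · intro h
    refine ⟨by rw [← h]; exact pow_orderOf_eq_one g, fun hcon => ?_⟩
    have h2 := orderOf_dvd_of_pow_eq_one hcon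
    rw [h] at h2
    have := (Nat.pow_dvd_pow_iff_le_right hp.one_lt).mp h2
    omega
  · rintro ⟨h1, h2⟩
    have := orderOf_eq_prime_pow (x := g) (n := j - 1) h2
      (by rwa [Nat.sub_add_cancel hj])
    rwa [Nat.sub_add_cancel hj] at this

end Abstract

lemma range_filter_dvd_card (n d : ℕ) (hd : 0 < d) (h : d ∣ n) :
    ((Finset.range n).filter fun y => d ∣ y).card = n / d := by
  rw [← Finset.card_range (n / d)]
  refine Finset.card_bij' (fun y _ => y / d) (fun c _ => c * d) ?_ ?_ ?_ ?_
  · intro y hy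
    simp only [mem_filter, mem_range] at hy ⊢
    exact Nat.div_lt_div_of_lt_of_dvd h hy.1
  · intro c hc
    simp only [mem_filter, mem_range] at hc ⊢
    refine ⟨?_, dvd_mul_left d c⟩
    calc c * d < (n / d) * d := by exact (Nat.mul_lt_mul_right hd).mpr hc
    _ = n := Nat.div_mul_cancel h
  · intro y hy
    simp only [mem_filter, mem_range] at hy
    exact Nat.div_mul_cancel hy.2
  · intro c hc
    exact Nat.mul_div_cancel c hd

lemma zmod_count_dvd (n m : ℕ) [NeZero n] (hm : 0 < m) (h : m ∣ n) :
    (univ.filter fun x : ZMod n => m • x = 0).card = m := by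
  have key : ∀ x : ZMod n, m • x = 0 ↔ (n / m) ∣ x.val := by
    intro x
    have h1 : m • x = ((m * x.val : ℕ) : ZMod n) := by
      push_cast
      rw [ZMod.natCast_val, ZMod.cast_id, nsmul_eq_mul]
    rw [h1, ZMod.natCast_eq_zero_iff]
    constructor
    · intro hv
      have hv' : m * (n / m) ∣ m * x.val := by rwa [Nat.mul_div_cancel' h]
      exact (Nat.mul_dvd_mul_iff_left hm).mp hv'
    · intro hv
      have := Nat.mul_dvd_mul_left m hv
      rwa [Nat.mul_div_cancel' h] at this
  have hnd : (n / m) ∣ n := Nat.div_dvd_of_dvd h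
  have hd0 : 0 < n / m := Nat.div_pos (Nat.le_of_dvd (Nat.pos_of_ne_zero (NeZero.ne n)) h) hm
  have key2 : (univ.filter fun x : ZMod n => m • x = 0).card
      = ((Finset.range n).filter fun y => (n / m) ∣ y).card := by
    refine Finset.card_bij' (fun x _ => x.val) (fun y _ => (y : ZMod n)) ?_ ?_ ?_ ?_
    · intro x hx
      simp only [mem_filter, mem_range, mem_univ, true_and] at hx ⊢
      exact ⟨ZMod.val_lt x, (key x).mp hx⟩
    · intro y hy
      simp only [mem_filter, mem_range, mem_univ, true_and] at hy ⊢
      rw [key, ZMod.val_cast_of_lt hy.1]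
      exact hy.2
    · intro x _
      exact ZMod.natCast_rightInverse x
    · intro y hy
      simp only [mem_filter, mem_range] at hy
      exact ZMod.val_cast_of_lt hy.1
  rw [key2, range_filter_dvd_card n (n / m) hd0 hnd, Nat.div_div_self h (NeZero.ne n)]

lemma zmod_count_all (n m : ℕ) [NeZero n] (h : n ∣ m) :
    (univ.filter fun x : ZMod n => m • x = 0).card = n := by
  have key : ∀ x : ZMod n, m • x = 0 := by
    intro x
    have : (m : ZMod n) = 0 := (ZMod.natCast_eq_zero_iff m n).mpr h
    rw [nsmul_eq_mul, this, zero_mul]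
  rw [Finset.filter_true_of_mem fun x _ => key x, Finset.card_univ, ZMod.card]

lemma mult_pow_count {A B : Type*} [AddGroup A] [AddGroup B] [Fintype A] [Fintype B]
    [DecidableEq A] [DecidableEq B] (m : ℕ) :
    (univ.filter fun g : Multiplicative (A × B) => g ^ m = 1).card
      = (univ.filter fun x : A => m • x = 0).card
        * (univ.filter fun y : B => m • y = 0).card := by
  have key : ∀ g : Multiplicative (A × B),
      g ^ m = 1 ↔ (m • (Multiplicative.toAdd g).1 = 0 ∧ m • (Multiplicative.toAdd g).2 = 0) := by
    intro g
    rw [← Multiplicative.toAdd.injective.eq_iff, toAdd_pow, toAdd_one, Prod.ext_iff]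
    simp
  have step1 : (univ.filter fun g : Multiplicative (A × B) => g ^ m = 1).card
      = (univ.filter fun z : A × B => m • z.1 = 0 ∧ m • z.2 = 0).card := by
    refine Finset.card_bij' (fun g _ => Multiplicative.toAdd g)
      (fun z _ => Multiplicative.ofAdd z) ?_ ?_ ?_ ?_
    · intro g hg
      simp only [mem_filter, mem_univ, true_and] at hg ⊢
      exact (key g).mp hg
    · intro z hz
      simp only [mem_filter, mem_univ, true_and] at hz ⊢
      exact (key (Multiplicative.ofAdd z)).mpr hz
    · intro g _; rfl
    · intro z _; rfl
  rw [step1]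
  have hprod : (univ.filter fun z : A × B => m • z.1 = 0 ∧ m • z.2 = 0)
      = (univ.filter fun x : A => m • x = 0) ×ˢ (univ.filter fun y : B => m • y = 0) := by
    ext z
    simp [Finset.mem_product, and_comm]
  rw [hprod, Finset.card_product]


lemma sum_helper (F : ℕ → ℕ) (p k : ℕ) (hk : 1 ≤ k) (h0 : F 0 = 1) (h1 : F 1 = p + 1)
    (hmid : ∀ j, 2 ≤ j → j ≤ k → F j = p) (htop : F (k + 1) = 0) :
    ∑ j ∈ Finset.range (k + 2), F j = k * p + 2 := by
  rw [show k + 2 = (k + 1) + 1 from rfl, Finset.sum_range_succ, htop, add_zero]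
  rw [Finset.range_eq_Ico,
    ← Finset.sum_Ico_consecutive _ (by omega : 0 ≤ 2) (by omega : 2 ≤ k + 1)]
  have h01 : ∑ j ∈ Finset.Ico 0 2, F j = 1 + (p + 1) := by
    rw [← Finset.range_eq_Ico, Finset.sum_range_succ, Finset.sum_range_one, h0, h1]
  have hmidsum : ∑ j ∈ Finset.Ico 2 (k + 1), F j = (k - 1) * p := by
    rw [Finset.sum_congr rfl (fun j hj => by
      simp only [Finset.mem_Ico] at hj
      exact hmid j hj.1 (by omega)), Finset.sum_const, smul_eq_mul, Nat.card_Ico,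
      show k + 1 - 2 = k - 1 from by omega]
  rw [h01, hmidsum]
  have h1' : (k - 1) * p = k * p - p := by rw [Nat.sub_mul, one_mul]
  have h2 : p ≤ k * p := Nat.le_mul_of_pos_left p (by omega)
  omega

set_option maxHeartbeats 1000000 in
lemma abstract_count {G : Type*} [Group G] [Fintype G] [DecidableEq G] (p k : ℕ) (hp : p.Prime) (hk : 1 ≤ k)
    (hcardG : Fintype.card G = p ^ (k + 1))
    (hD : ∀ j ≤ k + 1, (univ.filter fun g : G => g ^ (p ^ j) = 1).card
      = min p (p ^ j) * min (p ^ j) (p ^ k)) :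
    Nat.card {H : Subgroup G // IsCyclic H} = k * p + 2 := by
  haveI : Fact p.Prime := ⟨hp⟩
  haveI : Finite (Subgroup G) :=
    Finite.of_injective (fun H => (H : Set G)) SetLike.coe_injective
  haveI : Fintype (Subgroup G) := Fintype.ofFinite _
  have hfact : ∀ n : ℕ, ((p ^ n : ℕ)).factorization p = n := by
    intro n
    rw [hp.factorization_pow, Finsupp.single_eq_same]
  have hcard_pow : ∀ H : Subgroup G, (∃ x : G, H = zpowers x) →
      ∃ j ≤ k + 1, Nat.card H = p ^ j := by
    rintro H ⟨x, rfl⟩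
    have hdvd : orderOf x ∣ p ^ (k + 1) := by
      rw [← hcardG]; exact orderOf_dvd_card
    obtain ⟨j, hj, hx⟩ := (Nat.dvd_prime_pow hp).mp hdvd
    exact ⟨j, hj, by rw [Nat.card_zpowers, hx]⟩
  -- D values
  have hD0 : (univ.filter fun g : G => g ^ (p ^ 0) = 1).card = 1 := by
    rw [hD 0 (by omega), pow_zero, min_eq_right hp.one_le,
      min_eq_left (Nat.one_le_pow _ _ hp.pos), mul_one]
  have hDmid : ∀ j, 1 ≤ j → j ≤ k →
      (univ.filter fun g : G => g ^ (p ^ j) = 1).card = p * p ^ j := by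
    intro j h1 h2
    rw [hD j (by omega), min_eq_left (Nat.le_self_pow (by omega) p),
      min_eq_left (Nat.pow_le_pow_right hp.pos h2)]
  have hDtop : (univ.filter fun g : G => g ^ (p ^ (k + 1)) = 1).card = p * p ^ k := by
    rw [hD (k + 1) (by omega), min_eq_left (Nat.le_self_pow (by omega) p),
      min_eq_right (Nat.pow_le_pow_right hp.pos (by omega))]
  -- E values
  have hsub : ∀ j, 1 ≤ j →
      (univ.filter fun g : G => g ^ (p ^ (j - 1)) = 1)
        ⊆ (univ.filter fun g : G => g ^ (p ^ j) = 1) := by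
    intro j hj g hg
    simp only [mem_filter, mem_univ, true_and] at hg ⊢
    calc g ^ p ^ j = (g ^ p ^ (j - 1)) ^ p := by
          rw [← pow_mul, ← pow_succ, Nat.sub_add_cancel hj]
    _ = 1 := by rw [hg, one_pow]
  have hEval : ∀ j, 1 ≤ j → (univ.filter fun g : G => orderOf g = p ^ j).card
      = (univ.filter fun g : G => g ^ (p ^ j) = 1).card
        - (univ.filter fun g : G => g ^ (p ^ (j - 1)) = 1).card := by
    intro j hj
    rw [aux_order_sdiff p j hp hj, Finset.card_sdiff_of_subset (hsub j hj)]
  have hE0 : (univ.filter fun g : G => orderOf g = p ^ 0).card = 1 := by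
    have h : (univ.filter fun g : G => orderOf g = p ^ 0) = {1} := by
      ext g
      simp [orderOf_eq_one_iff]
    rw [h, Finset.card_singleton]
  -- Tc values
  have hTE : ∀ j, (univ.filter fun g : G => orderOf g = p ^ j).card
      = (univ.filter fun H : Subgroup G =>
          (∃ x : G, H = zpowers x) ∧ Nat.card H = p ^ j).card * (p ^ j).totient :=
    fun j => aux_fiber (p ^ j)
  have htotpos : ∀ j, 0 < (p ^ j).totient := fun j =>
    Nat.totient_pos.mpr (pow_pos hp.pos j)
  have hTc0 : (univ.filter fun H : Subgroup G =>
      (∃ x : G, H = zpowers x) ∧ Nat.card H = p ^ 0).card = 1 := by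
    have e := hTE 0
    rw [hE0, show ((p : ℕ) ^ 0).totient = 1 from by rw [pow_zero, Nat.totient_one],
      mul_one] at e
    omega
  have hTc1 : (univ.filter fun H : Subgroup G =>
      (∃ x : G, H = zpowers x) ∧ Nat.card H = p ^ 1).card = p + 1 := by
    have e1 := hTE 1
    rw [hEval 1 le_rfl] at e1
    rw [show (1 : ℕ) - 1 = 0 from rfl, hD0, hDmid 1 le_rfl hk,
      show ((p : ℕ) ^ 1).totient = p - 1 from by rw [pow_one, Nat.totient_prime hp]] at e1
    have h2 := hp.two_le
    have e2 : (p + 1) * (p - 1) = p * p ^ 1 - 1 := by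
      rw [pow_one]
      zify [hp.one_le, show 1 ≤ p * p from Nat.one_le_iff_ne_zero.mpr
        (Nat.mul_ne_zero hp.pos.ne' hp.pos.ne')]
      ring
    refine (Nat.eq_of_mul_eq_mul_right (by omega : 0 < p - 1) ?_)
    rw [e2, ← e1]
  have hTcmid : ∀ j, 2 ≤ j → j ≤ k → (univ.filter fun H : Subgroup G =>
      (∃ x : G, H = zpowers x) ∧ Nat.card H = p ^ j).card = p := by
    intro j h2 hjk
    have e1 := hTE j
    rw [hEval j (by omega), hDmid j (by omega) hjk, hDmid (j - 1) (by omega) (by omega),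
      Nat.totient_prime_pow hp (by omega : 0 < j)] at e1
    have e2 : p * (p ^ (j - 1) * (p - 1)) = p * p ^ j - p * p ^ (j - 1) := by
      have hpj : p ^ j = p ^ (j - 1) * p := by
        rw [← pow_succ, Nat.sub_add_cancel (by omega)]
      rw [hpj]
      have h1 : 1 ≤ p := hp.one_le
      have hle : p * p ^ (j - 1) ≤ p * (p ^ (j - 1) * p) :=
        Nat.mul_le_mul_left _ (Nat.le_mul_of_pos_right _ hp.pos)
      zify [h1, hle]
      ring
    refine Nat.eq_of_mul_eq_mul_right
      (show 0 < p ^ (j - 1) * (p - 1) by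
        have := hp.two_le
        exact Nat.mul_pos (pow_pos hp.pos _) (by omega)) ?_
    rw [e2, ← e1]
  have hTctop : (univ.filter fun H : Subgroup G =>
      (∃ x : G, H = zpowers x) ∧ Nat.card H = p ^ (k + 1)).card = 0 := by
    have e1 := hTE (k + 1)
    rw [hEval (k + 1) (by omega), Nat.add_sub_cancel, hDtop, hDmid k hk le_rfl,
      Nat.sub_self] at e1
    have h := htotpos (k + 1)
    rcases Nat.mul_eq_zero.mp e1.symm with h' | h'
    · exact h'
    · omega
  -- main computation
  rw [Nat.card_eq_fintype_card, Fintype.card_subtype]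
  rw [Finset.card_eq_sum_card_fiberwise
      (f := fun H : Subgroup G => (Nat.card H).factorization p) (t := Finset.range (k + 2))
      (fun H hH => by
        simp only [Finset.mem_coe, mem_filter, mem_univ, true_and] at hH
        obtain ⟨j, hj, hcard⟩ := hcard_pow H ((aux_isCyclic_iff H).mp hH)
        show (Nat.card H).factorization p ∈ Finset.range (k + 2)
        rw [hcard, hfact]
        simp only [Finset.mem_range]
        omega)]
  refine Eq.trans (Finset.sum_congr rfl fun j hj => ?_)
    (sum_helper (fun j => (univ.filter fun H : Subgroup G =>
      (∃ x : G, H = zpowers x) ∧ Nat.card H = p ^ j).card) p k hk hTc0 hTc1 hTcmid hTctop)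
  rw [Finset.filter_filter]
  apply congrArg Finset.card
  apply Finset.filter_congr
  intro H _
  rw [aux_isCyclic_iff]
  constructor
  · rintro ⟨hx, hfj⟩
    refine ⟨hx, ?_⟩
    obtain ⟨j0, hj0, hc⟩ := hcard_pow H hx
    rw [hc, hfact] at hfj
    rw [hc, hfj]
  · rintro ⟨hx, hc⟩
    exact ⟨hx, by rw [hc, hfact]⟩

lemma count_concrete (p k : ℕ) (hp : p.Prime) (hk : 1 ≤ k) :
    Nat.card {H : Subgroup (Multiplicative (ZMod p × ZMod (p ^ k))) // IsCyclic H}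
      = k * p + 2 := by
  haveI : NeZero p := ⟨hp.pos.ne'⟩
  haveI : NeZero (p ^ k) := ⟨pow_ne_zero k hp.pos.ne'⟩
  refine abstract_count p k hp hk ?_ ?_
  · rw [Fintype.card_multiplicative, Fintype.card_prod, ZMod.card, ZMod.card, pow_succ']
  · intro j hj
    have hA : (univ.filter fun x : ZMod p => (p ^ j) • x = 0).card = min p (p ^ j) := by
      rcases Nat.eq_zero_or_pos j with rfl | hj1
      · rw [pow_zero, zmod_count_dvd p 1 one_pos (one_dvd p), min_eq_right hp.one_le]
      · rw [zmod_count_all p (p ^ j) (dvd_pow_self p hj1.ne'),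
          min_eq_left (Nat.le_self_pow hj1.ne' p)]
    have hB : (univ.filter fun y : ZMod (p ^ k) => (p ^ j) • y = 0).card
        = min (p ^ j) (p ^ k) := by
      rcases le_or_gt j k with h | h
      · rw [zmod_count_dvd (p ^ k) (p ^ j) (pow_pos hp.pos j) (pow_dvd_pow p h),
          min_eq_left (Nat.pow_le_pow_right hp.pos h)]
      · rw [zmod_count_all (p ^ k) (p ^ j) (pow_dvd_pow p (by omega)),
          min_eq_right (Nat.pow_le_pow_right hp.pos (by omega))]
    have base : (univ.filter
          fun g : Multiplicative (ZMod p × ZMod (p ^ k)) => g ^ (p ^ j) = 1).card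
        = (univ.filter fun x : ZMod p => (p ^ j) • x = 0).card
          * (univ.filter fun y : ZMod (p ^ k) => (p ^ j) • y = 0).card :=
      mult_pow_count (p ^ j)
    rw [hA, hB] at base
    exact base

theorem zmod_p_mul_zmod_ppow_cyclic_count (p a : ℕ) (hp : p.Prime) (ha : 2 ≤ a) :
    Nat.card {H : Subgroup (Multiplicative (ZMod p × ZMod (p ^ (a - 1)))) // IsCyclic H} =
      (a - 1) * p + 2 :=
  count_concrete p (a - 1) hp (by omega)
end

section
/- There is no 11-cyclic group of order pq for distinct primes p and q, i.e., no group of order pq has exactly 11 cyclic subgroups. -/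
open Finset

lemma fact_pq {p q : ℕ} (hp : p.Prime) (hq : q.Prime) (hne : p ≠ q) :
    (p * q).factorization p = 1 := by
  rw [Nat.factorization_mul hp.ne_zero hq.ne_zero]
  simp [hp.factorization, Nat.factorization_eq_zero_of_not_dvd
    (fun h => hne ((Nat.prime_dvd_prime_iff_eq hp hq).mp h))]

lemma count_order_eq_sylow {p q : ℕ} (hp : p.Prime) (hq : q.Prime) (hne : p ≠ q)
    (G : Type*) [Group G] [Fintype G] (hG : Nat.card G = p * q) :
    Nat.card {H : Subgroup G // Nat.card H = p} = Nat.card (Sylow p G) := by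
  haveI := Fact.mk hp
  have hfp : p ^ ((Nat.card G).factorization p) = p := by
    rw [hG, fact_pq hp hq hne, pow_one]
  exact Nat.card_congr
    { toFun := fun H => Sylow.ofCard H.1 (by rw [hfp]; exact H.2)
      invFun := fun P => ⟨P.1, by rw [P.card_eq_multiplicity, hfp]⟩
      left_inv := fun H => Subtype.ext (Sylow.coe_ofCard H.1 (by rw [hfp]; exact H.2))
      right_inv := fun P => Sylow.ext (Sylow.coe_ofCard (P : Subgroup G)
        (by rw [P.card_eq_multiplicity, hfp])) }

lemma sylow_facts {p q : ℕ} (hp : p.Prime) (hq : q.Prime) (hne : p ≠ q)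
    (G : Type*) [Group G] [Fintype G] (hG : Nat.card G = p * q) :
    (Nat.card (Sylow p G) = 1 ∨ Nat.card (Sylow p G) = q) ∧
      (Nat.card (Sylow p G) = q → p < q) := by
  haveI := Fact.mk hp
  obtain ⟨P⟩ := (inferInstance : Nonempty (Sylow p G))
  have hcardP : Nat.card P = p := by
    rw [P.card_eq_multiplicity, hG, fact_pq hp hq hne, pow_one]
  have hidx : (P : Subgroup G).index = q := by
    have := Subgroup.card_mul_index (P : Subgroup G)
    rw [hcardP, hG] at this
    exact Nat.eq_of_mul_eq_mul_left hp.pos this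
  have hdvd : Nat.card (Sylow p G) ∣ q := hidx ▸ P.card_dvd_index
  have hmod : Nat.card (Sylow p G) ≡ 1 [MOD p] := card_sylow_modEq_one p G
  refine ⟨hq.eq_one_or_self_of_dvd _ hdvd, fun h => ?_⟩
  rw [h] at hmod
  have hd : p ∣ q - 1 := (Nat.modEq_iff_dvd' hq.one_lt.le).mp hmod.symm
  have := Nat.le_of_dvd (Nat.sub_pos_of_lt hq.one_lt) hd
  omega

theorem no_eleven_cyclic_of_order_pq (p q : ℕ) (hp : p.Prime) (hq : q.Prime) (hne : p ≠ q)
    (G : Type*) [Group G] [Fintype G] (hG : Nat.card G = p * q) :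
    Nat.card {H : Subgroup G // IsCyclic H} ≠ 11 := by
  classical
  haveI := Fact.mk hp
  haveI := Fact.mk hq
  haveI : Fintype (Subgroup G) := Fintype.ofFinite _
  intro h11
  have hp2 := hp.two_le
  have hq2 := hq.two_le
  set s : Finset (Subgroup G) := Finset.univ.filter (fun H : Subgroup G => IsCyclic H) with hs
  have hcards : Nat.card {H : Subgroup G // IsCyclic H} = s.card := by
    rw [Nat.card_eq_fintype_card, Fintype.card_subtype]
  -- every subgroup has card 1, p, q or p*q
  have hmem : ∀ H : Subgroup G, Nat.card H = 1 ∨ Nat.card H = p ∨ Nat.card H = q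
      ∨ Nat.card H = p * q := by
    intro H
    have hdvd : Nat.card H ∣ p * q := hG ▸ Subgroup.card_subgroup_dvd_card H
    by_cases hpd : p ∣ Nat.card H
    · obtain ⟨e, he⟩ := hpd
      rw [he, Nat.mul_dvd_mul_iff_left hp.pos] at hdvd
      rcases hq.eq_one_or_self_of_dvd e hdvd with rfl | rfl
      · right; left; omega
      · right; right; right; exact he
    · have hdq : Nat.card H ∣ q :=
        Nat.Coprime.dvd_of_dvd_mul_left (hp.coprime_iff_not_dvd.mpr hpd).symm hdvd
      rcases hq.eq_one_or_self_of_dvd _ hdq with h1 | h1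
      · exact Or.inl h1
      · exact Or.inr (Or.inr (Or.inl h1))
  have h1pq : 1 < p * q := lt_of_lt_of_le hp.one_lt (Nat.le_mul_of_pos_right p hq.pos)
  have hplt : p < p * q := (lt_mul_iff_one_lt_right hp.pos).mpr hq.one_lt
  have hqlt : q < p * q := (lt_mul_iff_one_lt_left hq.pos).mpr hp.one_lt
  have hfib : s.card = ∑ n ∈ ({1, p, q, p * q} : Finset ℕ),
      (s.filter fun H => Nat.card (H : Subgroup G) = n).card := by
    apply Finset.card_eq_sum_card_fiberwise
    intro H _
    simpa using hmem H
  rw [Finset.sum_insert (by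
        simp only [Finset.mem_insert, Finset.mem_singleton]
        push_neg
        exact ⟨by omega, by omega, h1pq.ne⟩),
      Finset.sum_insert (by
        simp only [Finset.mem_insert, Finset.mem_singleton]
        push_neg
        exact ⟨hne, hplt.ne⟩),
      Finset.sum_insert (by
        simp only [Finset.mem_singleton]
        exact hqlt.ne),
      Finset.sum_singleton] at hfib
  have e1 : (s.filter fun H => Nat.card (H : Subgroup G) = 1).card = 1 := by
    rw [Finset.card_eq_one]
    refine ⟨⊥, ?_⟩
    ext H
    simp only [Finset.mem_filter, Finset.mem_singleton, hs, Finset.mem_univ, true_and,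
      Finset.filter_filter]
    constructor
    · rintro ⟨-, h⟩; exact Subgroup.card_eq_one.mp h
    · rintro rfl; exact ⟨inferInstance, Subgroup.card_bot⟩
  have ep : (s.filter fun H => Nat.card (H : Subgroup G) = p).card
      = Nat.card (Sylow p G) := by
    rw [← count_order_eq_sylow hp hq hne G hG, Nat.card_eq_fintype_card, Fintype.card_subtype]
    congr 1
    ext H
    simp only [hs, Finset.filter_filter, Finset.mem_filter, Finset.mem_univ, true_and]
    exact ⟨fun h => h.2, fun h => ⟨isCyclic_of_prime_card h, h⟩⟩
  have eq' : (s.filter fun H => Nat.card (H : Subgroup G) = q).card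
      = Nat.card (Sylow q G) := by
    rw [← count_order_eq_sylow hq hp hne.symm G (by rw [hG, mul_comm]),
      Nat.card_eq_fintype_card, Fintype.card_subtype]
    congr 1
    ext H
    simp only [hs, Finset.filter_filter, Finset.mem_filter, Finset.mem_univ, true_and]
    exact ⟨fun h => h.2, fun h => ⟨isCyclic_of_prime_card h, h⟩⟩
  have e4 : (s.filter fun H => Nat.card (H : Subgroup G) = p * q).card ≤ 1 := by
    rw [Finset.card_le_one]
    intro H hH K hK
    simp only [Finset.mem_filter, hs, Finset.filter_filter, Finset.mem_univ, true_and] at hH hK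
    rw [Subgroup.eq_top_of_card_eq _ (hH.2.trans hG.symm),
      Subgroup.eq_top_of_card_eq _ (hK.2.trans hG.symm)]
  obtain ⟨haor, halt⟩ := sylow_facts hp hq hne G hG
  obtain ⟨hbor, hblt⟩ := sylow_facts hq hp hne.symm G (by rw [hG, mul_comm])
  rw [hcards, hfib, e1, ep, eq'] at h11
  have hp8 : p ≠ 8 := by rintro rfl; norm_num at hp
  have hp9 : p ≠ 9 := by rintro rfl; norm_num at hp
  have hq8 : q ≠ 8 := by rintro rfl; norm_num at hq
  have hq9 : q ≠ 9 := by rintro rfl; norm_num at hq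
  rcases haor with ha | ha <;> rcases hbor with hb | hb
  · omega
  · have := hblt hb; omega
  · have := halt ha; omega
  · exact absurd (halt ha) (not_lt.mpr (hblt hb).le)
end
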